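/- Let h_n be the number of block-cyclic permutations of length n. Then the generating function H(z) = Σ_{n≥0} h_n zⁿ equals (1-z)²/(1-3z+2z²-z³); equivalently h_n = h_{n-1} + Σ_{k≥2} (k-1) h_{n-k}, i.e., h_n satisfies h_n = 3h_{n-1} - 2h_{n-2} + h_{n-3} for n ≥ 3 (with h₀ = 1, h₁ = 1, h₂ = 2). -/

import Mathlib

def IsBlockCyclic {n : ℕ} (p : Equiv.Perm (Fin n)) : Prop :=
  ∃ (t : ℕ) (s : ℕ → ℕ), s 0 = 0 ∧ s t = n ∧ (∀ b, b < t → s b < s (b + 1)) ∧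
    ∀ b, b < t → ∃ d : ℕ, d < s (b + 1) - s b ∧ (2 ≤ s (b + 1) - s b → 1 ≤ d) ∧
      ∀ j, s b + j < s (b + 1) → ∀ h : s b + j < n,
        (p ⟨s b + j, h⟩ : ℕ) = s b + (j + d) % (s (b + 1) - s b)

/-- `h n`: the number of block-cyclic permutations of length n. -/
noncomputable def blockCyclicCount (n : ℕ) : ℕ :=
  Nat.card {p : Equiv.Perm (Fin n) // IsBlockCyclic p}

/-!
Splitting off the first block: a block-cyclic permutation of length `n ≥ 1` is uniquely a
rotation of its first `k` points (the identity if `k = 1`, one of the `k - 1` nontrivial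
rotations if `k ≥ 2`) followed by a block-cyclic permutation of the remaining `n - k` points.
Hence `h n = h (n - 1) + ∑_{k ≥ 2} (k - 1) h (n - k)`; the second difference of the convolution
`∑_{i < m} (m - i) h i` is `h (m + 1)`, which turns this into the third-order recurrence and
thus the rational generating function.
-/

section finSumFinEquivOfLE

variable {n k : ℕ} (hkn : k ≤ n)

def finSumFinEquivOfLE : Fin k ⊕ Fin (n - k) ≃ Fin n :=
  finSumFinEquiv.trans (finCongr (Nat.add_sub_cancel' hkn))

theorem finSumFinEquivOfLE_inl (i : Fin k) :
    finSumFinEquivOfLE hkn (.inl i) = ⟨i, by omega⟩ := rfl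

theorem finSumFinEquivOfLE_inr (i : Fin (n - k)) :
    finSumFinEquivOfLE hkn (.inr i) = ⟨k + i, by omega⟩ := rfl

theorem finSumFinEquivOfLE_symm_of_lt {i : ℕ} (hi : i < k) (hin : i < n) :
    (finSumFinEquivOfLE hkn).symm ⟨i, hin⟩ = .inl ⟨i, hi⟩ := by
  rw [Equiv.symm_apply_eq]; rfl

theorem finSumFinEquivOfLE_symm_of_le {i : ℕ} (hi : k ≤ i) (hin : i < n) :
    (finSumFinEquivOfLE hkn).symm ⟨i, hin⟩ = .inr ⟨i - k, by omega⟩ := by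
  rw [Equiv.symm_apply_eq, finSumFinEquivOfLE_inr]; ext; show i = k + (i - k); omega

end finSumFinEquivOfLE

open Finset in
theorem Finset.sum_range_succ_tsub_nsmul {M : Type*} [AddCommMonoid M] (f : ℕ → M) (m : ℕ) :
    ∑ i ∈ range (m + 1), (m + 1 - i) • f i =
      ∑ i ∈ range m, (m - i) • f i + ∑ i ∈ range (m + 1), f i := by
  have hsucc : ∀ i ∈ range m, (m + 1 - i) • f i = (m - i) • f i + f i := fun i hi => by
    rw [show m + 1 - i = m - i + 1 by have := mem_range.mp hi; omega, succ_nsmul]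
  rw [sum_range_succ, sum_congr rfl hsucc, sum_add_distrib, sum_range_succ f m,
    Nat.add_sub_cancel_left, one_smul, add_assoc]

open Finset in
theorem Finset.sum_Icc_two_reflect {M : Type*} [AddCommMonoid M] (f : ℕ → M) (m : ℕ) :
    ∑ k ∈ Icc 2 (m + 1), (k - 1) • f (m + 1 - k) = ∑ i ∈ range m, (m - i) • f i := by
  refine sum_nbij' (fun k => m + 1 - k) (fun i => m + 1 - i) ?_ ?_ ?_ ?_ ?_ <;>
    intro x hx <;> simp only [mem_Icc, mem_range] at hx ⊢
  all_goals first | omega | congr 1; omega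

open PowerSeries in
theorem PowerSeries.mk_mul_cubic_eq_of_recurrence {R : Type*} [CommRing R] (g : ℕ → R)
    (h0 : g 0 = 1) (h1 : g 1 = 1) (h2 : g 2 = 2)
    (h3 : ∀ n, g (n + 3) + 2 * g (n + 1) = 3 * g (n + 2) + g n) :
    mk g * (1 - 3 * X + 2 * X ^ 2 - X ^ 3) = (1 - X) ^ 2 := by
  have expand (f : R⟦X⟧) : f * (1 - 3 * X + 2 * X ^ 2 - X ^ 3) =
      f - C 3 * (f * X ^ 1) + C 2 * (f * X ^ 2) - f * X ^ 3 := by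
    simp only [map_ofNat]; ring
  have hsq : ((1 - X) ^ 2 : R⟦X⟧) = 1 - C 2 * X ^ 1 + X ^ 2 := by
    simp only [map_ofNat]; ring
  ext n
  rw [expand, hsq]
  simp only [map_sub, map_add, coeff_C_mul, coeff_mul_X_pow', coeff_mk, coeff_one, coeff_X_pow]
  match n with
  | 0 => simp [h0]
  | 1 => norm_num [h0, h1]
  | 2 => norm_num [h0, h1, h2]
  | n + 3 =>
    simp only [le_add_iff_nonneg_left, zero_le, if_true, show n + 3 - 1 = n + 2 by omega,
      show n + 3 - 2 = n + 1 by omega, add_tsub_cancel_right, coeff_succ_C, Nat.reduceEqDiff,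
      if_false]
    linear_combination h3 n

section BlockCyclic

open Equiv

variable {n : ℕ}

/-- The points `a, …, n - 1` are tiled by consecutive intervals on each of which `p` is an
admissible rotation. -/
inductive IsBlockCyclicFrom (p : Perm (Fin n)) : ℕ → Prop
  | empty : IsBlockCyclicFrom p n
  | block {a k d : ℕ} (hd : d < k) (hd₁ : 2 ≤ k → 1 ≤ d)
      (hp : ∀ j < k, ∀ h : a + j < n, (p ⟨a + j, h⟩ : ℕ) = a + (j + d) % k) :
      IsBlockCyclicFrom p (a + k) → IsBlockCyclicFrom p a

theorem IsBlockCyclicFrom.le {p : Perm (Fin n)} {a : ℕ} (h : IsBlockCyclicFrom p a) : a ≤ n := by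
  induction h <;> omega

theorem isBlockCyclicFrom_of_blocks {p : Perm (Fin n)} {t : ℕ} {s : ℕ → ℕ} (hs : s t = n)
    (hmono : ∀ b < t, s b < s (b + 1))
    (hblk : ∀ b, b < t → ∃ d : ℕ, d < s (b + 1) - s b ∧ (2 ≤ s (b + 1) - s b → 1 ≤ d) ∧
      ∀ j, s b + j < s (b + 1) → ∀ h : s b + j < n,
        (p ⟨s b + j, h⟩ : ℕ) = s b + (j + d) % (s (b + 1) - s b)) :
    IsBlockCyclicFrom p (s 0) := by
  induction t generalizing s with
  | zero => rw [hs]; exact .empty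
  | succ t ih =>
    obtain ⟨d, hd, hd₁, hp⟩ := hblk 0 t.succ_pos
    have hlen : s 0 + (s 1 - s 0) = s 1 := Nat.add_sub_of_le (hmono 0 t.succ_pos).le
    refine .block hd hd₁ (fun j hj h => hp j (by omega) h) ?_
    rw [hlen]
    exact ih (s := fun b => s (b + 1)) hs (fun b hb => hmono (b + 1) (by omega))
      (fun b hb => hblk (b + 1) (by omega))

theorem blocks_of_isBlockCyclicFrom {p : Perm (Fin n)} {a : ℕ} (h : IsBlockCyclicFrom p a) :
    ∃ (t : ℕ) (s : ℕ → ℕ), s 0 = a ∧ s t = n ∧ (∀ b, b < t → s b < s (b + 1)) ∧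
    ∀ b, b < t → ∃ d : ℕ, d < s (b + 1) - s b ∧ (2 ≤ s (b + 1) - s b → 1 ≤ d) ∧
      ∀ j, s b + j < s (b + 1) → ∀ h : s b + j < n,
        (p ⟨s b + j, h⟩ : ℕ) = s b + (j + d) % (s (b + 1) - s b) := by
  induction h with
  | empty => exact ⟨0, fun _ => n, rfl, rfl, by simp, by simp⟩
  | @block a k d hd hd₁ hp _ ih =>
    obtain ⟨t, s, hs0, hst, hmono, hblk⟩ := ih
    refine ⟨t + 1, fun | 0 => a | b + 1 => s b, rfl, hst, ?_, ?_⟩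
    · rintro (_ | b) hb
      · show a < s 0; omega
      · exact hmono b (by omega)
    · rintro (_ | b) hb
      · refine ⟨d, ?_⟩
        simp only [hs0, Nat.add_sub_cancel_left]
        exact ⟨hd, hd₁, fun j hj h => hp j (by omega) h⟩
      · exact hblk b (by omega)

theorem isBlockCyclic_iff (p : Perm (Fin n)) : IsBlockCyclic p ↔ IsBlockCyclicFrom p 0 := by
  constructor
  · rintro ⟨t, s, hs0, hst, hmono, hblk⟩
    exact hs0 ▸ isBlockCyclicFrom_of_blocks hst hmono hblk
  · exact blocks_of_isBlockCyclicFrom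

section prependBlock

variable {k : ℕ} (hkn : k ≤ n) (d : Fin k) (q : Perm (Fin (n - k)))

def prependBlock : Perm (Fin n) :=
  (finSumFinEquivOfLE hkn).permCongr ((finCycle d).sumCongr q)

theorem prependBlock_apply_of_lt {i : ℕ} (hi : i < k) (hin : i < n) :
    (prependBlock hkn d q ⟨i, hin⟩ : ℕ) = (i + d) % k := by
  rw [prependBlock, permCongr_apply, finSumFinEquivOfLE_symm_of_lt hkn hi]
  simp [finSumFinEquivOfLE_inl, Fin.val_add]

theorem prependBlock_apply_of_le {i : ℕ} (hi : k ≤ i) (hin : i < n) :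
    (prependBlock hkn d q ⟨i, hin⟩ : ℕ) = k + q ⟨i - k, by omega⟩ := by
  rw [prependBlock, permCongr_apply, finSumFinEquivOfLE_symm_of_le hkn hi]
  simp [finSumFinEquivOfLE_inr]

variable {q}

theorem isBlockCyclicFrom_prependBlock {a : ℕ} (h : IsBlockCyclicFrom q a) :
    IsBlockCyclicFrom (prependBlock hkn d q) (k + a) := by
  induction h with
  | empty => rw [Nat.add_sub_cancel' hkn]; exact .empty
  | @block a l e he he₁ hq _ ih =>
    refine .block he he₁ (fun j hj h => ?_) (by rwa [← add_assoc] at ih)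
    rw [prependBlock_apply_of_le hkn d q (by omega) h]
    have := hq j hj (by omega)
    simp only [add_assoc, Nat.add_sub_cancel_left]
    omega

theorem IsBlockCyclicFrom.of_prependBlock {b : ℕ}
    (h : IsBlockCyclicFrom (prependBlock hkn d q) b) (hkb : k ≤ b) :
    IsBlockCyclicFrom q (b - k) := by
  induction h with
  | empty => exact .empty
  | @block b l e he he₁ hp _ ih =>
    refine .block he he₁ (fun j hj h => ?_)
      (by rw [← Nat.sub_add_comm hkb]; exact ih (by omega))
    have := prependBlock_apply_of_le hkn d q (i := b + j) (by omega) (by omega)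
    rw [hp j hj] at this
    simp only [show b + j - k = b - k + j by omega] at this
    omega

theorem isBlockCyclicFrom_prependBlock_iff {a : ℕ} :
    IsBlockCyclicFrom (prependBlock hkn d q) (k + a) ↔ IsBlockCyclicFrom q a :=
  ⟨fun h => by simpa using h.of_prependBlock hkn d (by omega), isBlockCyclicFrom_prependBlock hkn d⟩

end prependBlock

theorem exists_eq_prependBlock {k : ℕ} (hkn : k ≤ n) (d : Fin k) {p : Perm (Fin n)}
    (hp : ∀ i < k, ∀ h : i < n, (p ⟨i, h⟩ : ℕ) = (i + d) % k) :
    ∃ q, p = prependBlock hkn d q := by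
  set e := finSumFinEquivOfLE hkn
  have hval (a : Fin k) : (p (e (.inl a)) : ℕ) = (finCycle d a : ℕ) := by
    rw [finSumFinEquivOfLE_inl, hp a a.isLt, finCycle_apply, Fin.val_add]
  have hinl (a : Fin k) : e.symm (p (e (.inl a))) = .inl (finCycle d a) := by
    rw [Equiv.symm_apply_eq, finSumFinEquivOfLE_inl]; ext; exact hval a
  obtain ⟨⟨σ₁, σ₂⟩, hσ⟩ := Perm.mem_sumCongrHom_range_of_perm_mapsTo_inl
    (σ := e.symm.permCongr p) (by rintro _ ⟨a, rfl⟩; exact ⟨_, (hinl a).symm⟩)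
  have hσ₁ : σ₁ = finCycle d := by
    ext1 a
    have := congrArg (· (Sum.inl a)) hσ
    simp only [Perm.sumCongrHom_apply, Perm.sumCongr_apply, Sum.map_inl, permCongr_apply,
      symm_symm, hinl] at this
    exact Sum.inl_injective this
  refine ⟨σ₂, ?_⟩
  have hσ' : σ₁.sumCongr σ₂ = e.permCongr.symm p := hσ
  rw [prependBlock, ← hσ₁, hσ', Equiv.apply_symm_apply]

theorem prependBlock_inj {k : ℕ} (hkn : k ≤ n) {d d' : Fin k} {q q' : Perm (Fin (n - k))}
    (h : prependBlock hkn d q = prependBlock hkn d' q') : d = d' ∧ q = q' := by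
  have h' : Perm.sumCongrHom _ _ (finCycle d, q) = Perm.sumCongrHom _ _ (finCycle d', q') :=
    (finSumFinEquivOfLE hkn).permCongr.injective h
  obtain ⟨hd, hq⟩ := Prod.ext_iff.mp (Perm.sumCongrHom_injective h')
  refine ⟨?_, hq⟩
  simpa [Fin.ext_iff, Fin.val_add, Nat.mod_eq_of_lt] using
    congrArg (fun σ : Perm (Fin k) => σ ⟨0, d.pos⟩) hd

theorem blockSize_eq_of_prependBlock_eq {k k' : ℕ} {hkn : k ≤ n} {hkn' : k' ≤ n}
    {d : Fin k} {d' : Fin k'} {q : Perm (Fin (n - k))} {q' : Perm (Fin (n - k'))}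
    (hd : 2 ≤ k → 1 ≤ (d : ℕ)) (hd' : 2 ≤ k' → 1 ≤ (d' : ℕ))
    (h : prependBlock hkn d q = prependBlock hkn' d' q') : k = k' := by
  by_contra hne
  wlog hlt : k < k' generalizing k k'
  · exact this hd' hd h.symm (Ne.symm hne) (by omega)
  have hval (i : ℕ) (hi : i < k) : (i + d) % k = (i + d') % k' := by
    have := congrArg (fun p : Perm (Fin n) => (p ⟨i, by omega⟩ : ℕ)) h
    rwa [prependBlock_apply_of_lt hkn _ _ hi, prependBlock_apply_of_lt hkn' _ _ (by omega)] at this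
  have hdd' : (d : ℕ) = d' := by
    simpa [Nat.mod_eq_of_lt] using hval 0 d.pos
  -- `k - d` is sent to `0` by the shorter block but to `k` by the longer one.
  have := hval (k - d) (by have := d.pos; have := hd' (by omega); omega)
  rw [← hdd', Nat.sub_add_cancel d.isLt.le, Nat.mod_self, Nat.mod_eq_of_lt hlt] at this
  have := d.pos
  omega

theorem isBlockCyclic_prependBlock {k : ℕ} (hkn : k ≤ n) {d : Fin k} (hd : 2 ≤ k → 1 ≤ (d : ℕ))
    {q : Perm (Fin (n - k))} (hq : IsBlockCyclic q) : IsBlockCyclic (prependBlock hkn d q) := by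
  rw [isBlockCyclic_iff] at hq ⊢
  refine .block (a := 0) d.isLt hd (fun j hj h => ?_) ?_
  · simp only [zero_add, prependBlock_apply_of_lt hkn d q hj]
  · simpa using (isBlockCyclicFrom_prependBlock_iff hkn d (a := 0)).mpr hq

theorem exists_eq_prependBlock_of_isBlockCyclic (hn : 0 < n) {p : Perm (Fin n)}
    (hp : IsBlockCyclic p) : ∃ (k : ℕ) (hkn : k ≤ n) (d : Fin k), (2 ≤ k → 1 ≤ (d : ℕ)) ∧
      ∃ q, IsBlockCyclic q ∧ p = prependBlock hkn d q := by
  rw [isBlockCyclic_iff] at hp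
  rcases hp with _ | @⟨_, k, d, hd, hd₁, hfirst, hrest⟩
  · omega
  rw [zero_add] at hrest
  obtain ⟨q, hpq⟩ := exists_eq_prependBlock hrest.le ⟨d, hd⟩
    (fun i hi h => by simpa using hfirst i hi (by simpa using h))
  refine ⟨k, hrest.le, ⟨d, hd⟩, hd₁, q, ?_, hpq⟩
  rw [isBlockCyclic_iff, ← isBlockCyclicFrom_prependBlock_iff hrest.le ⟨d, hd⟩, add_zero, ← hpq]
  exact hrest

abbrev BlockShift (k : ℕ) : Type := {d : Fin k // 2 ≤ k → 1 ≤ (d : ℕ)}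

theorem card_blockShift_one : Nat.card (BlockShift 1) = 1 := by
  rw [Nat.card_eq_fintype_card]; decide

theorem card_blockShift {k : ℕ} (hk : 2 ≤ k) : Nat.card (BlockShift k) = k - 1 := by
  have : BlockShift k ≃ {d : Fin k // d ≠ ⟨0, by omega⟩} :=
    Equiv.subtypeEquivRight fun d => by simp [hk, Fin.ext_iff, Nat.one_le_iff_ne_zero]
  rw [Nat.card_congr this, Nat.card_eq_fintype_card, Fintype.card_subtype_compl,
    Fintype.card_subtype_eq, Fintype.card_fin]

theorem blockCyclicCount_eq_sum (hn : 0 < n) :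
    blockCyclicCount n =
      ∑ k ∈ Finset.Icc 1 n, Nat.card (BlockShift k) * blockCyclicCount (n - k) := by
  let F : (Σ k : Finset.Icc 1 n, BlockShift k × {q : Perm (Fin (n - k)) // IsBlockCyclic q}) →
      {p : Perm (Fin n) // IsBlockCyclic p} := fun ⟨k, d, q⟩ =>
    ⟨prependBlock (Finset.mem_Icc.mp k.2).2 d.1 q.1, isBlockCyclic_prependBlock _ d.2 q.2⟩
  have hF : Function.Bijective F := by
    constructor
    · rintro ⟨⟨k, hk⟩, d, q⟩ ⟨⟨k', hk'⟩, d', q'⟩ h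
      have h := congrArg Subtype.val h
      obtain rfl := blockSize_eq_of_prependBlock_eq d.2 d'.2 h
      obtain ⟨hd, hq⟩ := prependBlock_inj _ h
      exact Sigma.ext rfl (heq_of_eq (Prod.ext (Subtype.ext hd) (Subtype.ext hq)))
    · rintro ⟨p, hp⟩
      obtain ⟨k, hkn, d, hd, q, hq, rfl⟩ := exists_eq_prependBlock_of_isBlockCyclic hn hp
      exact ⟨⟨⟨k, Finset.mem_Icc.mpr ⟨d.pos, hkn⟩⟩, ⟨d, hd⟩, ⟨q, hq⟩⟩, rfl⟩
  rw [blockCyclicCount, ← Nat.card_eq_of_bijective F hF, Nat.card_sigma]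
  simp only [Nat.card_prod]
  exact Finset.sum_coe_sort _ fun k => Nat.card (BlockShift k) * blockCyclicCount (n - k)

theorem blockCyclicCount_zero : blockCyclicCount 0 = 1 := by
  have : Unique {p : Perm (Fin 0) // IsBlockCyclic p} :=
    { default := ⟨1, (isBlockCyclic_iff 1).mpr .empty⟩
      uniq := fun _ => Subsingleton.elim _ _ }
  exact Nat.card_unique

theorem blockCyclicCount_eq (hn : 1 ≤ n) :
    blockCyclicCount n =
      blockCyclicCount (n - 1) + ∑ k ∈ Finset.Icc 2 n, (k - 1) * blockCyclicCount (n - k) := by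
  rw [blockCyclicCount_eq_sum hn, ← Finset.insert_Icc_add_one_left_eq_Icc hn,
    Finset.sum_insert (by simp), card_blockShift_one, one_mul]
  congr 1
  refine Finset.sum_congr rfl fun k hk => ?_
  rw [card_blockShift (Finset.mem_Icc.mp hk).1]

theorem blockCyclicCount_one : blockCyclicCount 1 = 1 := by
  simpa [blockCyclicCount_zero] using blockCyclicCount_eq le_rfl

theorem blockCyclicCount_two : blockCyclicCount 2 = 2 := by
  simpa [blockCyclicCount_zero, blockCyclicCount_one] using blockCyclicCount_eq (n := 2) (by omega)

theorem blockCyclicCount_succ (m : ℕ) :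
    blockCyclicCount (m + 1) =
      blockCyclicCount m + ∑ i ∈ Finset.range m, (m - i) * blockCyclicCount i := by
  have hreflect := Finset.sum_Icc_two_reflect blockCyclicCount m
  simp only [smul_eq_mul] at hreflect
  rw [blockCyclicCount_eq (n := m + 1) (by omega), hreflect, Nat.add_sub_cancel]

theorem blockCyclicCount_add_three (m : ℕ) :
    blockCyclicCount (m + 3) + 2 * blockCyclicCount (m + 1) =
      3 * blockCyclicCount (m + 2) + blockCyclicCount m := by
  let a (j : ℕ) := ∑ i ∈ Finset.range j, (j - i) * blockCyclicCount i
  let S (j : ℕ) := ∑ i ∈ Finset.range j, blockCyclicCount i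
  have ha (j : ℕ) : a (j + 1) = a j + S (j + 1) := by
    simpa only [smul_eq_mul] using Finset.sum_range_succ_tsub_nsmul blockCyclicCount j
  have hS : S (m + 2) = S (m + 1) + blockCyclicCount (m + 1) := Finset.sum_range_succ _ _
  have h₀ : blockCyclicCount (m + 1) = blockCyclicCount m + a m := blockCyclicCount_succ m
  have h₁ : blockCyclicCount (m + 2) = blockCyclicCount (m + 1) + a (m + 1) :=
    blockCyclicCount_succ (m + 1)
  have h₂ : blockCyclicCount (m + 3) = blockCyclicCount (m + 2) + a (m + 2) :=
    blockCyclicCount_succ (m + 2)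
  have ha₀ : a (m + 1) = a m + S (m + 1) := ha m
  have ha₁ : a (m + 2) = a (m + 1) + S (m + 2) := ha (m + 1)
  omega

end BlockCyclic

open PowerSeries in
theorem blockCyclic_generating_function :
    (PowerSeries.mk fun n => (blockCyclicCount n : ℚ)) *
        (1 - 3 * X + 2 * X ^ 2 - X ^ 3) = (1 - X) ^ 2 ∧
    blockCyclicCount 0 = 1 ∧ blockCyclicCount 1 = 1 ∧ blockCyclicCount 2 = 2 ∧
    (∀ n : ℕ, 1 ≤ n →
      blockCyclicCount n =
        blockCyclicCount (n - 1) +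
          ∑ k ∈ Finset.Icc 2 n, (k - 1) * blockCyclicCount (n - k)) ∧
    (∀ n : ℕ, 3 ≤ n →
      blockCyclicCount n + 2 * blockCyclicCount (n - 2) =
        3 * blockCyclicCount (n - 1) + blockCyclicCount (n - 3)) := by
  refine ⟨?_, blockCyclicCount_zero, blockCyclicCount_one, blockCyclicCount_two,
    fun n hn => blockCyclicCount_eq hn, fun n hn => ?_⟩
  · apply PowerSeries.mk_mul_cubic_eq_of_recurrence
    · simp [blockCyclicCount_zero]
    · simp [blockCyclicCount_one]
    · simp [blockCyclicCount_two]
    · intro m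
      exact_mod_cast blockCyclicCount_add_three m
  · obtain ⟨m, rfl⟩ := Nat.exists_eq_add_of_le' hn
    simpa using blockCyclicCount_add_three m
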